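/- The following are equivalent: (1) there is a p-inductive formula that is not <-inductive; (2) in some model M of PA⁻, there is an element c, definable in M by a parameter-free L_OR formula, such that M ⊨ ¬∃y( c = 2y ∨ c = 2y+1 ) (i.e., c is neither even nor odd). -/

import Mathlib

open FirstOrder Language

/-! ### The language `L_OR = {0, 1, +, ×, <}` of ordered rings -/

/-- Function symbols of the language of ordered rings. -/
inductive LorFunc : ℕ → Type
  | zero : LorFunc 0
  | one : LorFunc 0
  | add : LorFunc 2
  | mul : LorFunc 2

/-- Relation symbols of the language of ordered rings: just `<`. -/
inductive LorRel : ℕ → Type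
  | lt : LorRel 2

/-- The first-order language of ordered rings. -/
def Lor : Language := ⟨LorFunc, LorRel⟩

/-- The term `0`. -/
def zeroT {α : Type} : Lor.Term α := Constants.term LorFunc.zero

/-- The term `1`. -/
def oneT {α : Type} : Lor.Term α := Constants.term LorFunc.one

/-- Addition of terms. -/
def addT {α : Type} (t u : Lor.Term α) : Lor.Term α := Functions.apply₂ LorFunc.add t u

/-- Multiplication of terms. -/
def mulT {α : Type} (t u : Lor.Term α) : Lor.Term α := Functions.apply₂ LorFunc.mul t u

/-- The term `2`, an abbreviation for `1 + 1`. -/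
def twoT {α : Type} : Lor.Term α := addT oneT oneT

/-- The numeral `k`, i.e. the closed term `(⋯((0+1)+1)+⋯+1)` with `k` ones. -/
def numT {α : Type} : ℕ → Lor.Term α
  | 0 => zeroT
  | n + 1 => addT (numT n) oneT

/-- The bounded formula `t < u`. -/
def ltBF {α : Type} {n : ℕ} (t u : Lor.Term (α ⊕ Fin n)) : Lor.BoundedFormula α n :=
  Relations.boundedFormula₂ LorRel.lt t u

/-- The formula `t < u`. -/
def ltFml {α : Type} (t u : Lor.Term α) : Lor.Formula α :=
  Relations.formula₂ LorRel.lt t u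

/-- The formula `t ≤ u`, an abbreviation for `t < u ∨ t = u`. -/
def leFml {α : Type} (t u : Lor.Term α) : Lor.Formula α :=
  ltFml t u ⊔ Term.equal t u

/-! ### The base theory `PA⁻` -/

/-- `PA⁻`, the theory of non-negative parts of discretely ordered rings. -/
def PAminus : Lor.Theory :=
  { -- (P1) associativity of +
    ∀' ∀' ∀' (addT (addT &0 &1) &2 =' addT &0 (addT &1 &2)),
    -- (P2) commutativity of +
    ∀' ∀' (addT &0 &1 =' addT &1 &0),
    -- (P3) associativity of ×
    ∀' ∀' ∀' (mulT (mulT &0 &1) &2 =' mulT &0 (mulT &1 &2)),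
    -- (P4) commutativity of ×
    ∀' ∀' (mulT &0 &1 =' mulT &1 &0),
    -- (P5) distributivity
    ∀' ∀' ∀' (mulT &0 (addT &1 &2) =' addT (mulT &0 &1) (mulT &0 &2)),
    -- (P6) x + 0 = x
    ∀' (addT &0 zeroT =' &0),
    -- (P7) x × 0 = 0
    ∀' (mulT &0 zeroT =' zeroT),
    -- (P8) x × 1 = x
    ∀' (mulT &0 oneT =' &0),
    -- (P9) transitivity of <
    ∀' ∀' ∀' (ltBF &0 &1 ⊓ ltBF &1 &2 ⟹ ltBF &0 &2),
    -- (P10) irreflexivity of <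
    ∀' ∼(ltBF &0 &0),
    -- (P11) linearity of <
    ∀' ∀' (ltBF &0 &1 ⊔ &0 =' &1 ⊔ ltBF &1 &0),
    -- (P12) x < y → x + z < y + z
    ∀' ∀' ∀' (ltBF &0 &1 ⟹ ltBF (addT &0 &2) (addT &1 &2)),
    -- (P13) z ≠ 0 ∧ x < y → x × z < y × z
    ∀' ∀' ∀' (∼(&2 =' zeroT) ⊓ ltBF &0 &1 ⟹ ltBF (mulT &0 &2) (mulT &1 &2)),
    -- (P14) x < y ↔ ∃z ((x + z) + 1 = y)
    ∀' ∀' (ltBF &0 &1 ⇔ ∃' (addT (addT &0 &2) oneT =' &1)),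
    -- (P15) 0 < 1 ∧ (x > 0 → x ≥ 1)
    ltBF zeroT oneT ⊓ ∀' (ltBF zeroT &0 ⟹ ltBF oneT &0 ⊔ oneT =' &0),
    -- (P16) x ≥ 0
    ∀' (ltBF zeroT &0 ⊔ zeroT =' &0) }

/-! ### Formulas `θ(x, z̄)` with a distinguished variable `x` and parameters `z̄`

A formula `θ(x, z̄)` with `m` parameters `z̄` and a distinguished induction
variable `x` is represented as `θ : Lor.Formula (Fin m ⊕ Fin 1)`, where the
`Fin m` component gives the parameters and the `Fin 1` component gives `x`. -/

/-- The distinguished variable `x` as a term. -/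
def xT {m : ℕ} : Lor.Term (Fin m ⊕ Fin 1) := Term.var (Sum.inr 0)

/-- `θ(t, z̄)`, where `t` is a term possibly involving `x` and the parameters. -/
def substX {m : ℕ} (θ : Lor.Formula (Fin m ⊕ Fin 1)) (t : Lor.Term (Fin m ⊕ Fin 1)) :
    Lor.Formula (Fin m ⊕ Fin 1) :=
  θ.subst (Sum.elim (fun i => Term.var (Sum.inl i)) fun _ => t)

/-- `θ(t, z̄)` where `t` is a term in the parameters only. -/
def substP {m : ℕ} (θ : Lor.Formula (Fin m ⊕ Fin 1)) (t : Lor.Term (Fin m)) :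
    Lor.Formula (Fin m) :=
  θ.subst (Sum.elim (fun i => Term.var i) fun _ => t)

/-- `∀x θ(x, z̄)`. -/
noncomputable def allX {m : ℕ} (θ : Lor.Formula (Fin m ⊕ Fin 1)) : Lor.Formula (Fin m) :=
  Formula.iAlls (Fin 1) θ

/-- The universal closure of a formula, as a sentence. -/
noncomputable def closeAll {α : Type} [Finite α] (φ : Lor.Formula α) : Lor.Sentence :=
  Formula.iAlls α (φ.relabel (Sum.inr : α → Empty ⊕ α))

/-- `∀x' < x, θ(x', z̄)`, a formula with free variable `x` (and parameters). -/
noncomputable def allLtX {m : ℕ} (θ : Lor.Formula (Fin m ⊕ Fin 1)) :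
    Lor.Formula (Fin m ⊕ Fin 1) :=
  Formula.iAlls (Fin 1)
    (ltFml (Term.var (Sum.inr 0)) (Term.var (Sum.inl (Sum.inr 0))) ⟹
      θ.relabel (Sum.elim (fun i => Sum.inl (Sum.inl i)) fun _ => Sum.inr 0))

/-- `∀x' ≤ x, θ(x', z̄)`, a formula with free variable `x` (and parameters). -/
noncomputable def allLeX {m : ℕ} (θ : Lor.Formula (Fin m ⊕ Fin 1)) :
    Lor.Formula (Fin m ⊕ Fin 1) :=
  Formula.iAlls (Fin 1)
    (leFml (Term.var (Sum.inr 0)) (Term.var (Sum.inl (Sum.inr 0))) ⟹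
      θ.relabel (Sum.elim (fun i => Sum.inl (Sum.inl i)) fun _ => Sum.inr 0))

/-- The conjunction `⋀_{k<j} θ(k, z̄)`. -/
def conjNum {m : ℕ} (θ : Lor.Formula (Fin m ⊕ Fin 1)) : ℕ → Lor.Formula (Fin m)
  | 0 => ⊤
  | j + 1 => conjNum θ j ⊓ substP θ (numT j)

/-- The conjunction `⋀_{k<j} θ(x+k, z̄)`. -/
def conjShift {m : ℕ} (θ : Lor.Formula (Fin m ⊕ Fin 1)) : ℕ → Lor.Formula (Fin m ⊕ Fin 1)
  | 0 => ⊤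
  | j + 1 => conjShift θ j ⊓ substX θ (addT xT (numT j))

/-! ### Induction axioms -/

/-- The induction axiom `I_x θ`:
`∀z̄( θ(0,z̄) ∧ ∀x(θ(x,z̄) → θ(x+1,z̄)) → ∀x θ(x,z̄) )`. -/
noncomputable def indAx {m : ℕ} (θ : Lor.Formula (Fin m ⊕ Fin 1)) : Lor.Sentence :=
  closeAll ((substP θ zeroT ⊓ allX (θ ⟹ substX θ (addT xT oneT))) ⟹ allX θ)

/-- The `<`-induction axiom `I^<_x θ`:
`∀z̄( ∀y(∀x<y θ(x,z̄) → θ(y,z̄)) → ∀x θ(x,z̄) )`. -/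
noncomputable def indLtAx {m : ℕ} (θ : Lor.Formula (Fin m ⊕ Fin 1)) : Lor.Sentence :=
  closeAll (allX (allLtX θ ⟹ θ) ⟹ allX θ)

/-- The `(n+1)`-step induction axiom `I^{(n+1)-step}_x θ`:
`∀z̄( ⋀_{k<n+1} θ(k,z̄) ∧ ∀x(θ(x,z̄) → θ(x+n+1,z̄)) → ∀x θ(x,z̄) )`. -/
noncomputable def indStepAx {m : ℕ} (n : ℕ) (θ : Lor.Formula (Fin m ⊕ Fin 1)) : Lor.Sentence :=
  closeAll ((conjNum θ (n + 1) ⊓ allX (θ ⟹ substX θ (addT xT (numT (n + 1))))) ⟹ allX θ)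

/-- The `(n+1)`-induction axiom `I^{n+1}_x θ`:
`∀z̄( ⋀_{k<n+1} θ(k,z̄) ∧ ∀x(⋀_{k<n+1} θ(x+k,z̄) → θ(x+n+1,z̄)) → ∀x θ(x,z̄) )`. -/
noncomputable def indKAx {m : ℕ} (n : ℕ) (θ : Lor.Formula (Fin m ⊕ Fin 1)) : Lor.Sentence :=
  closeAll ((conjNum θ (n + 1) ⊓ allX (conjShift θ (n + 1) ⟹ substX θ (addT xT (numT (n + 1))))) ⟹
    allX θ)

/-- The polynomial induction axiom `I^p_x θ`:
`∀z̄( θ(0,z̄) ∧ ∀x(θ(x,z̄) → θ(2x,z̄) ∧ θ(2x+1,z̄)) → ∀x θ(x,z̄) )`, where `2x` is `(1+1)×x`. -/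
noncomputable def indPAx {m : ℕ} (θ : Lor.Formula (Fin m ⊕ Fin 1)) : Lor.Sentence :=
  closeAll ((substP θ zeroT ⊓
      allX (θ ⟹ substX θ (mulT twoT xT) ⊓ substX θ (addT (mulT twoT xT) oneT))) ⟹ allX θ)

/-! ### Theories -/

/-- Peano arithmetic: `PA⁻` plus induction for all `L_OR` formulas. -/
noncomputable def PA : Lor.Theory :=
  PAminus ∪ {σ | ∃ (m : ℕ) (θ : Lor.Formula (Fin m ⊕ Fin 1)), σ = indAx θ}

/-- `IOpen`: `PA⁻` plus induction for all quantifier-free `L_OR` formulas. -/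
noncomputable def IOpen : Lor.Theory :=
  PAminus ∪ {σ | ∃ (m : ℕ) (θ : Lor.Formula (Fin m ⊕ Fin 1)), θ.IsQF ∧ σ = indAx θ}

/-! ### Notions of inductiveness

A formula `φ(x)` with exactly one free variable `x` is represented as
`φ : Lor.Formula (Fin 0 ⊕ Fin 1)` (no parameters). -/

/-- Formulas `φ(x)` with exactly one free variable `x`. -/
abbrev OneVarFormula : Type := Lor.Formula (Fin 0 ⊕ Fin 1)

/-- The sentence `∀x φ(x)`. -/
noncomputable def allS (φ : OneVarFormula) : Lor.Sentence := closeAll (allX φ)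

/-- `φ(x)` is inductive: `PA⁻ ⊢ φ(0)` and `PA⁻ ⊢ ∀x(φ(x) → φ(x+1))`. -/
noncomputable def IsInductive (φ : OneVarFormula) : Prop :=
  PAminus ⊨ᵇ closeAll (substP φ zeroT) ∧
    PAminus ⊨ᵇ closeAll (allX (φ ⟹ substX φ (addT xT oneT)))

/-- `φ(x)` is `<`-inductive: `PA⁻ ⊢ ∀y(∀x<y φ(x) → φ(y))`. -/
noncomputable def IsLtInductive (φ : OneVarFormula) : Prop :=
  PAminus ⊨ᵇ closeAll (allX (allLtX φ ⟹ φ))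

/-- `φ(x)` is `(n+1)`-step inductive:
`PA⁻ ⊢ ⋀_{k<n+1} φ(k) ∧ ∀x(φ(x) → φ(x+n+1))`. -/
noncomputable def IsStepInductive (n : ℕ) (φ : OneVarFormula) : Prop :=
  PAminus ⊨ᵇ closeAll (conjNum φ (n + 1) ⊓ allX (φ ⟹ substX φ (addT xT (numT (n + 1)))))

/-- `φ(x)` is `(n+1)`-inductive:
`PA⁻ ⊢ ⋀_{k<n+1} φ(k) ∧ ∀x(⋀_{k<n+1} φ(x+k) → φ(x+n+1))`. -/
noncomputable def IsKInductive (n : ℕ) (φ : OneVarFormula) : Prop :=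
  PAminus ⊨ᵇ
    closeAll (conjNum φ (n + 1) ⊓ allX (conjShift φ (n + 1) ⟹ substX φ (addT xT (numT (n + 1)))))

/-- `φ(x)` is p-inductive (polynomially inductive):
`PA⁻ ⊢ φ(0) ∧ ∀x(φ(x) → φ(2x) ∧ φ(2x+1))`. -/
noncomputable def IsPInductive (φ : OneVarFormula) : Prop :=
  PAminus ⊨ᵇ closeAll (substP φ zeroT ⊓
    allX (φ ⟹ substX φ (mulT twoT xT) ⊓ substX φ (addT (mulT twoT xT) oneT)))

/-! ### Cuts -/

/-- `φ(x)` is a cut: an inductive formula with `PA⁻ ⊢ ∀x∀y(x<y ∧ φ(y) → φ(x))`. -/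
noncomputable def IsCut (φ : OneVarFormula) : Prop :=
  IsInductive φ ∧
    PAminus ⊨ᵇ closeAll
      (ltFml (Term.var (Sum.inr 0) : Lor.Term (Fin 0 ⊕ Fin 2)) (Term.var (Sum.inr 1)) ⊓
          φ.relabel (Sum.elim (fun i => Sum.inl i) fun _ => Sum.inr 1) ⟹
        φ.relabel (Sum.elim (fun i => Sum.inl i) fun _ => Sum.inr 0))

/-- `φ(x)` is an a-cut: a cut with `PA⁻ ⊢ ∀x(φ(x) → φ(x+x))`. -/
noncomputable def IsACut (φ : OneVarFormula) : Prop :=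
  IsCut φ ∧ PAminus ⊨ᵇ closeAll (allX (φ ⟹ substX φ (addT xT xT)))

/-- `φ(x)` is an am-cut: an a-cut with `PA⁻ ⊢ ∀x(φ(x) → φ(x×x))`. -/
noncomputable def IsAMCut (φ : OneVarFormula) : Prop :=
  IsACut φ ∧ PAminus ⊨ᵇ closeAll (allX (φ ⟹ substX φ (mulT xT xT)))

/-- The formula `∃y( x = 2y ∨ x = 2y+1 )` in the single free variable `x`,
where `2y` abbreviates `(1+1)×y`. -/
noncomputable def evenOrOddFml : Lor.Formula (Fin 1) :=
  Formula.iExs (Fin 1)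
    (Term.equal (Term.var (Sum.inl 0)) (mulT twoT (Term.var (Sum.inr 0))) ⊔
      Term.equal (Term.var (Sum.inl 0)) (addT (mulT twoT (Term.var (Sum.inr 0))) oneT))

/-!
If `φ` is p-inductive but not `<`-inductive, some model of `PA⁻` has an element `c` failing `φ`
below which `φ` holds; linearity makes `c` the unique such element, so `∀x<c φ(x) ∧ ¬φ(c)`
defines it. Were `c = 2d` or `c = 2d+1`, then `d < c` or `c = 0`, and p-inductivity would give
`φ(c)`. Conversely, if `δ` defines an element `c` that is neither even nor odd, then
`δ(x) → x is even or odd` is p-inductive, because `0`, `2x` and `2x+1` are even or odd outright,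
but it is not `<`-inductive: it holds below `c`, vacuously, and fails at `c`.
-/

section Interpretation

variable {M : Type*} [Lor.Structure M]

instance : Zero M := ⟨Structure.funMap (L := Lor) (LorFunc.zero : Lor.Functions 0) ![]⟩
instance : One M := ⟨Structure.funMap (L := Lor) (LorFunc.one : Lor.Functions 0) ![]⟩
instance : Add M :=
  ⟨fun a b => Structure.funMap (L := Lor) (LorFunc.add : Lor.Functions 2) ![a, b]⟩
instance : Mul M :=
  ⟨fun a b => Structure.funMap (L := Lor) (LorFunc.mul : Lor.Functions 2) ![a, b]⟩
instance : LT M :=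
  ⟨fun a b => Structure.RelMap (L := Lor) (LorRel.lt : Lor.Relations 2) ![a, b]⟩

@[simp] theorem realize_zeroT {α : Type} (v : α → M) : (zeroT : Lor.Term α).realize v = 0 := by
  simp only [zeroT, Constants.term, Term.realize]
  exact congrArg _ (Subsingleton.elim _ _)

@[simp] theorem realize_oneT {α : Type} (v : α → M) : (oneT : Lor.Term α).realize v = 1 := by
  simp only [oneT, Constants.term, Term.realize]
  exact congrArg _ (Subsingleton.elim _ _)

@[simp] theorem realize_addT {α : Type} (t u : Lor.Term α) (v : α → M) :
    (addT t u).realize v = t.realize v + u.realize v :=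
  Term.realize_functions_apply₂

@[simp] theorem realize_mulT {α : Type} (t u : Lor.Term α) (v : α → M) :
    (mulT t u).realize v = t.realize v * u.realize v :=
  Term.realize_functions_apply₂

@[simp] theorem realize_twoT {α : Type} (v : α → M) :
    (twoT : Lor.Term α).realize v = 1 + 1 := by
  simp [twoT]

@[simp] theorem realize_ltFml {α : Type} (t u : Lor.Term α) (v : α → M) :
    (ltFml t u).Realize v ↔ t.realize v < u.realize v :=
  Formula.realize_rel₂

@[simp] theorem realize_ltBF {α : Type} {n : ℕ} (t u : Lor.Term (α ⊕ Fin n)) (v : α → M)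
    (xs : Fin n → M) :
    (ltBF t u).Realize v xs ↔ t.realize (Sum.elim v xs) < u.realize (Sum.elim v xs) :=
  BoundedFormula.realize_rel₂

end Interpretation

namespace PAminus

variable {M : Type*} [Lor.Structure M] [M ⊨ PAminus]

theorem add_comm (a b : M) : a + b = b + a := by
  simpa [Fin.snoc] using Theory.realize_sentence_of_mem (M := M) PAminus
    (φ := ∀' ∀' (addT &0 &1 =' addT &1 &0)) (by simp [PAminus]) a b

theorem add_zero (a : M) : a + 0 = a := by
  simpa [Fin.snoc] using Theory.realize_sentence_of_mem (M := M) PAminus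
    (φ := ∀' (addT &0 zeroT =' &0)) (by simp [PAminus]) a

theorem mul_comm (a b : M) : a * b = b * a := by
  simpa [Fin.snoc] using Theory.realize_sentence_of_mem (M := M) PAminus
    (φ := ∀' ∀' (mulT &0 &1 =' mulT &1 &0)) (by simp [PAminus]) a b

theorem mul_add (a b c : M) : a * (b + c) = a * b + a * c := by
  simpa [Fin.snoc] using Theory.realize_sentence_of_mem (M := M) PAminus
    (φ := ∀' ∀' ∀' (mulT &0 (addT &1 &2) =' addT (mulT &0 &1) (mulT &0 &2)))
    (by simp [PAminus]) a b c

theorem mul_zero (a : M) : a * 0 = 0 := by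
  simpa [Fin.snoc] using Theory.realize_sentence_of_mem (M := M) PAminus
    (φ := ∀' (mulT &0 zeroT =' zeroT)) (by simp [PAminus]) a

theorem mul_one (a : M) : a * 1 = a := by
  simpa [Fin.snoc] using Theory.realize_sentence_of_mem (M := M) PAminus
    (φ := ∀' (mulT &0 oneT =' &0)) (by simp [PAminus]) a

theorem lt_irrefl (a : M) : ¬a < a := by
  simpa [Fin.snoc] using Theory.realize_sentence_of_mem (M := M) PAminus
    (φ := ∀' ∼(ltBF &0 &0)) (by simp [PAminus]) a

theorem lt_trichotomy (a b : M) : a < b ∨ a = b ∨ b < a := by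
  simpa [Fin.snoc, or_assoc] using Theory.realize_sentence_of_mem (M := M) PAminus
    (φ := ∀' ∀' (ltBF &0 &1 ⊔ &0 =' &1 ⊔ ltBF &1 &0)) (by simp [PAminus]) a b

theorem add_lt_add_right {a b : M} (h : a < b) (c : M) : a + c < b + c := by
  have hax : a < b → a + c < b + c := by
    simpa [Fin.snoc] using Theory.realize_sentence_of_mem (M := M) PAminus
      (φ := ∀' ∀' ∀' (ltBF &0 &1 ⟹ ltBF (addT &0 &2) (addT &1 &2))) (by simp [PAminus])
      a b c
  exact hax h

theorem lt_iff_exists_add_add_one (a b : M) : a < b ↔ ∃ z, a + z + 1 = b := by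
  simpa [Fin.snoc] using Theory.realize_sentence_of_mem (M := M) PAminus
    (φ := ∀' ∀' (ltBF &0 &1 ⇔ ∃' (addT (addT &0 &2) oneT =' &1))) (by simp [PAminus]) a b

theorem zero_lt_or_eq (a : M) : 0 < a ∨ 0 = a := by
  simpa [Fin.snoc] using Theory.realize_sentence_of_mem (M := M) PAminus
    (φ := ∀' (ltBF zeroT &0 ⊔ zeroT =' &0)) (by simp [PAminus]) a

theorem zero_add (a : M) : 0 + a = a := by
  rw [add_comm, add_zero]

theorem two_mul (a : M) : (1 + 1) * a = a + a := by
  rw [mul_comm, mul_add, mul_one]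

theorem lt_or_eq_zero_of_eq_two_mul {c d : M} (h : c = (1 + 1) * d ∨ c = (1 + 1) * d + 1) :
    d < c ∨ c = 0 := by
  rw [two_mul] at h
  rcases h with rfl | rfl
  · rcases zero_lt_or_eq d with hd | rfl
    · left
      simpa only [zero_add] using add_lt_add_right hd d
    · exact Or.inr (add_zero 0)
  · exact Or.inl ((lt_iff_exists_add_add_one _ _).2 ⟨d, rfl⟩)

end PAminus

section Semantics

variable {M : Type*} [Lor.Structure M]

theorem realize_closeAll {α : Type} [Finite α] (φ : Lor.Formula α) :
    M ⊨ closeAll φ ↔ ∀ v : α → M, φ.Realize v := by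
  simp [closeAll, Sentence.Realize, Formula.realize_iAlls, Formula.realize_relabel]

theorem realize_relabel_const {α β : Type} (φ : Lor.Formula α) (b : β) (a : M) :
    (φ.relabel fun _ => b).Realize (fun _ => a) ↔ φ.Realize fun _ => a :=
  Formula.realize_relabel

theorem OneVarFormula.realize_iff_const (θ : OneVarFormula) (v : Fin 0 ⊕ Fin 1 → M) :
    θ.Realize v ↔ θ.Realize fun _ => v (Sum.inr 0) := by
  congr! with x
  rcases x with i | i
  · exact i.elim0
  · exact congrArg Sum.inr (Subsingleton.elim i 0)

theorem realize_allX (θ : OneVarFormula) (v : Fin 0 → M) :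
    (allX θ).Realize v ↔ ∀ a : M, θ.Realize fun _ => a := by
  rw [allX, Formula.realize_iAlls]
  exact ⟨fun h a => (θ.realize_iff_const _).1 (h fun _ => a),
    fun h w => (θ.realize_iff_const _).2 (h _)⟩

theorem realize_substX (θ : OneVarFormula) (t : Lor.Term (Fin 0 ⊕ Fin 1))
    (v : Fin 0 ⊕ Fin 1 → M) :
    (substX θ t).Realize v ↔ θ.Realize fun _ => t.realize v :=
  BoundedFormula.realize_subst.trans (θ.realize_iff_const _)

theorem realize_substP (θ : OneVarFormula) (t : Lor.Term (Fin 0)) (v : Fin 0 → M) :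
    (substP θ t).Realize v ↔ θ.Realize fun _ => t.realize v :=
  BoundedFormula.realize_subst.trans (θ.realize_iff_const _)

theorem realize_allLtX (θ : OneVarFormula) (a : M) :
    (allLtX θ).Realize (fun _ => a) ↔ ∀ b < a, θ.Realize fun _ => b := by
  simp only [allLtX, Formula.realize_iAlls, Formula.realize_imp, realize_ltFml, Term.realize_var,
    Formula.realize_relabel]
  exact ⟨fun h b hb => (θ.realize_iff_const _).1 (h (fun _ => b) hb),
    fun h w hw => (θ.realize_iff_const _).2 (h _ hw)⟩

theorem realize_evenOrOddFml (c : M) :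
    evenOrOddFml.Realize (fun _ => c) ↔ ∃ d : M, c = (1 + 1) * d ∨ c = (1 + 1) * d + 1 := by
  simp only [evenOrOddFml, Formula.realize_iExs, Formula.realize_sup, Formula.realize_equal,
    Term.realize_var, realize_mulT, realize_addT, realize_twoT, realize_oneT, Sum.elim_inl,
    Sum.elim_inr]
  exact ⟨fun ⟨w, h⟩ => ⟨w 0, h⟩, fun ⟨d, h⟩ => ⟨fun _ => d, h⟩⟩

end Semantics

theorem isLtInductive_iff {φ : OneVarFormula} :
    IsLtInductive φ ↔ ∀ (M : Theory.ModelType.{0, 0, 0} PAminus) (c : M),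
      (∀ b < c, φ.Realize fun _ => b) → φ.Realize fun _ => c := by
  simp only [IsLtInductive, Theory.models_sentence_iff, realize_closeAll, realize_allX,
    Formula.realize_imp, realize_allLtX, Unique.forall_iff]

theorem isPInductive_iff {φ : OneVarFormula} :
    IsPInductive φ ↔ ∀ M : Theory.ModelType.{0, 0, 0} PAminus,
      φ.Realize (fun _ => (0 : M)) ∧ ∀ a : M, φ.Realize (fun _ => a) →
        φ.Realize (fun _ => (1 + 1) * a) ∧ φ.Realize (fun _ => (1 + 1) * a + 1) := by
  simp only [IsPInductive, Theory.models_sentence_iff, realize_closeAll, Formula.realize_inf,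
    realize_substP, realize_allX, Formula.realize_imp, realize_substX, realize_zeroT,
    realize_addT, realize_mulT, realize_twoT, realize_oneT, xT, Term.realize_var,
    Unique.forall_iff]

noncomputable def leastCounterexampleFml (φ : OneVarFormula) : Lor.Formula (Fin 1) :=
  (allLtX φ ⊓ ∼φ).relabel fun _ => 0

theorem realize_leastCounterexampleFml_iff {M : Type*} [Lor.Structure M] [M ⊨ PAminus]
    {φ : OneVarFormula} {c : M} (hlt : ∀ b < c, φ.Realize fun _ => b)
    (hc : ¬φ.Realize fun _ => c) (a : M) :
    (leastCounterexampleFml φ).Realize (fun _ => a) ↔ a = c := by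
  rw [leastCounterexampleFml, realize_relabel_const, Formula.realize_inf, Formula.realize_not,
    realize_allLtX]
  refine ⟨fun ⟨hlta, ha⟩ => ?_, fun ha => ha ▸ ⟨hlt, hc⟩⟩
  rcases PAminus.lt_trichotomy a c with hac | hac | hca
  · exact absurd (hlt a hac) ha
  · exact hac
  · exact absurd (hlta c hca) hc

theorem not_evenOrOdd_of_isPInductive {φ : OneVarFormula} (hP : IsPInductive φ)
    {M : Theory.ModelType.{0, 0, 0} PAminus} {c : M} (hlt : ∀ b < c, φ.Realize fun _ => b)
    (hc : ¬φ.Realize fun _ => c) : ¬evenOrOddFml.Realize fun _ => c := by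
  rw [realize_evenOrOddFml]
  rintro ⟨d, hd⟩
  obtain ⟨h0, hstep⟩ := isPInductive_iff.1 hP M
  rcases PAminus.lt_or_eq_zero_of_eq_two_mul hd with hdc | rfl
  · rcases hd with rfl | rfl
    exacts [hc (hstep d (hlt d hdc)).1, hc (hstep d (hlt d hdc)).2]
  · exact hc h0

noncomputable def impEvenOrOddFml (δ : Lor.Formula (Fin 1)) : OneVarFormula :=
  Formula.relabel (fun _ => Sum.inr 0) (δ ⟹ evenOrOddFml)

theorem isPInductive_impEvenOrOddFml (δ : Lor.Formula (Fin 1)) :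
    IsPInductive (impEvenOrOddFml δ) := by
  simp only [isPInductive_iff, impEvenOrOddFml, realize_relabel_const, Formula.realize_imp,
    realize_evenOrOddFml]
  exact fun M => ⟨fun _ => ⟨0, Or.inl (PAminus.mul_zero (1 + 1)).symm⟩,
    fun a _ => ⟨fun _ => ⟨a, Or.inl rfl⟩, fun _ => ⟨a, Or.inr rfl⟩⟩⟩

theorem not_isLtInductive_impEvenOrOddFml {M : Theory.ModelType.{0, 0, 0} PAminus} {c : M}
    {δ : Lor.Formula (Fin 1)} (hδ : ∀ a : M, δ.Realize (fun _ => a) ↔ a = c)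
    (hc : ¬evenOrOddFml.Realize fun _ => c) : ¬IsLtInductive (impEvenOrOddFml δ) := by
  simp only [isLtInductive_iff, impEvenOrOddFml, realize_relabel_const, Formula.realize_imp]
  intro h
  refine hc (h M c (fun b hbc hb => ?_) ((hδ c).2 rfl))
  exact absurd ((hδ b).1 hb ▸ hbc) (PAminus.lt_irrefl c)

/-- The following are equivalent: (1) there is a p-inductive formula that is not
`<`-inductive; (2) in some model `M` of `PA⁻`, there is an element `c`, definable in `M`
by a parameter-free `L_OR` formula, that is neither even nor odd. -/
theorem stmt18 :
    (∃ φ : OneVarFormula, IsPInductive φ ∧ ¬IsLtInductive φ) ↔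
      ∃ (M : Theory.ModelType.{0, 0, 0} PAminus) (c : M),
        (∃ δ : Lor.Formula (Fin 1), ∀ a : M, δ.Realize (fun _ => a) ↔ a = c) ∧
          ¬ evenOrOddFml.Realize fun _ => c := by
  constructor
  · rintro ⟨φ, hP, hL⟩
    obtain ⟨M, c, hlt, hc⟩ : ∃ (M : Theory.ModelType.{0, 0, 0} PAminus) (c : M),
        (∀ b < c, φ.Realize fun _ => b) ∧ ¬φ.Realize fun _ => c := by
      simpa [isLtInductive_iff] using hL
    exact ⟨M, c, ⟨leastCounterexampleFml φ, realize_leastCounterexampleFml_iff hlt hc⟩,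
      not_evenOrOdd_of_isPInductive hP hlt hc⟩
  · rintro ⟨M, c, ⟨δ, hδ⟩, hc⟩
    exact ⟨impEvenOrOddFml δ, isPInductive_impEvenOrOddFml δ,
      not_isLtInductive_impEvenOrOddFml hδ hc⟩
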